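/- Let (R, m) be a Noetherian local ring which is not a field, and let I be a proper ideal of R with m² ⊆ I such that the Artinian local ring R/I is Gorenstein (equivalently, since m² ⊆ I ⊊ R, the socle (I :_R m)/I is a one-dimensional R/m-vector space). If I is not weakly m-full, i.e. (mI :_R m) ≠ I, then m² = Im and μ_R(m) = 1 + μ_R(I), where μ_R denotes the minimal number of generators. -/

import Mathlib

/-
The socle `(I : m)/I` is simple, so every ideal between `I` and `(I : m)` is one of the two.
This applies to `(mI : m)`, which is not `I`, and to `m`, which is not `I` because otherwise
`m ⊆ m²` and Nakayama would force `m = 0`. Hence `(mI : m) = (I : m) = m`, i.e. `m² = mI`.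
Then `m = I + Rx` for any `x ∈ m \ I`, so `μ(m) ≤ μ(I) + 1`; and since `mI = m²`, the space
`I/mI` is a proper subspace of `m/m²`, so `μ(I) < μ(m)`.
-/

/-- The length of an `R`-module `M`: the supremum of lengths of strictly
increasing chains of submodules of `M`, valued in `ℕ∞`. -/
noncomputable def modLength (R M : Type*) [CommRing R] [AddCommGroup M] [Module R M] : ℕ∞ :=
  ⨆ s : RelSeries {(a, b) : Submodule R M × Submodule R M | a < b}, (s.length : ℕ∞)

/-- The minimal number of generators of an ideal. -/
noncomputable def mu {R : Type*} [CommRing R] (I : Ideal R) : ℕ :=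
  sInf {n : ℕ | ∃ s : Finset R, s.card = n ∧ Ideal.span (s : Set R) = I}

open IsLocalRing Submodule

theorem modLength_eq_length (R M : Type*) [CommRing R] [AddCommGroup M] [Module R M] :
    modLength R M = Module.length R M := by
  apply WithBot.coe_injective
  rw [Module.coe_length, Order.krullDim_eq_iSup_length]
  rfl

theorem mu_eq_spanFinrank {R : Type*} [CommRing R] (I : Ideal R) : mu I = I.spanFinrank := by
  rw [spanFinrank_eq_iInf, mu, iInf]
  congr 1
  ext n
  simp [eq_comm, Ideal.span, and_comm]

namespace Submodule

variable {R M : Type*} [CommRing R] [AddCommGroup M] [Module R M]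

theorem eq_or_eq_of_isSimpleModule_quotient {I J S : Submodule R M}
    (hS : IsSimpleModule R (S ⧸ comap S.subtype I)) (hIJ : I ≤ J) (hJS : J ≤ S) :
    J = I ∨ J = S := by
  rw [isSimpleModule_iff_isCoatom] at hS
  rcases hS.le_iff.mp (comap_mono hIJ : comap S.subtype I ≤ comap S.subtype J) with h | h
  · refine Or.inr (le_antisymm hJS fun x hx => ?_)
    exact h.ge (mem_top (x := (⟨x, hx⟩ : S)))
  · refine Or.inl (le_antisymm (fun x hx => ?_) hIJ)
    exact h.le (show (⟨x, hJS hx⟩ : S) ∈ comap S.subtype J from hx)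

theorem spanFinrank_sup_span_singleton_le {N : Submodule R M} (hN : N.FG) (x : M) :
    (N ⊔ span R {x}).spanFinrank ≤ N.spanFinrank + 1 := by
  classical
  obtain ⟨s, hcard, rfl⟩ := hN.exists_span_finset_card_eq_spanFinrank
  rw [← hcard, sup_comm, ← span_insert, ← Finset.coe_insert]
  exact (spanFinrank_span_le_ncard_of_finite (Finset.finite_toSet _)).trans
    (by rw [Set.ncard_coe_finset]; exact Finset.card_insert_le x s)

section IsLocalRing

variable [IsLocalRing R]

theorem spanFinrank_lt_of_lt_of_smul_le {N L : Submodule R M} (hN : N.FG) (hL : L.FG)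
    (hNL : N < L) (hsmul : maximalIdeal R • L ≤ maximalIdeal R • N) :
    N.spanFinrank < L.spanFinrank := by
  -- `N/mN` embeds into `L/mL` as a proper subspace over the residue field.
  let := Ideal.Quotient.field (maximalIdeal R)
  have : Module.Finite R L := Module.Finite.iff_fg.mpr hL
  have : Module.Finite (R ⧸ maximalIdeal R) (L ⧸ maximalIdeal R • (⊤ : Submodule R L)) :=
    Module.Finite.of_restrictScalars_finite R _ _
  let f := (mapQ (maximalIdeal R • ⊤) (maximalIdeal R • ⊤) (inclusion hNL.le) fun x hx => by
      simp only [mem_comap, mem_smul_top_iff] at hx ⊢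
      exact smul_mono_right _ hNL.le hx).extendScalarsOfSurjective
    (S := R ⧸ maximalIdeal R) Ideal.Quotient.mk_surjective
  have hinj : Function.Injective f := by
    refine (injective_iff_map_eq_zero f).mpr fun x hx => ?_
    induction x using Submodule.Quotient.induction_on with | _ x
    simp only [f, LinearMap.extendScalarsOfSurjective_apply, mapQ_apply,
      Quotient.mk_eq_zero, mem_smul_top_iff, coe_inclusion] at hx ⊢
    exact hsmul hx
  have hrange : LinearMap.range f ≠ ⊤ := by
    obtain ⟨y, hyL, hyN⟩ := SetLike.exists_of_lt hNL
    intro htop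
    obtain ⟨x, hx⟩ := LinearMap.range_eq_top.mp htop (Quotient.mk ⟨y, hyL⟩)
    induction x using Submodule.Quotient.induction_on with | _ x
    simp only [f, LinearMap.extendScalarsOfSurjective_apply, mapQ_apply,
      Quotient.eq, mem_smul_top_iff] at hx
    have : (x : M) - y ∈ N := smul_le_right (hsmul hx)
    exact hyN (by simpa using sub_mem x.2 this)
  rw [IsLocalRing.spanFinrank_eq_finrank_quotient N hN,
    IsLocalRing.spanFinrank_eq_finrank_quotient L hL, ← LinearMap.finrank_range_of_inj hinj]
  exact Submodule.finrank_lt hrange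

end IsLocalRing

end Submodule

namespace Ideal

variable {R : Type*} [CommRing R]

theorem le_colon_iff_mul_le {I J L : Ideal R} : L ≤ I.colon J ↔ L * J ≤ I := by
  rw [mul_le]
  exact forall₂_congr fun _ _ => mem_colon

end Ideal

theorem IsLocalRing.maximalIdeal_eq_bot_of_le_mul_self {R : Type*} [CommRing R]
    [IsNoetherianRing R] [IsLocalRing R] (h : maximalIdeal R ≤ maximalIdeal R * maximalIdeal R) :
    maximalIdeal R = ⊥ :=
  eq_bot_of_le_smul_of_le_jacobson_bot _ _ (IsNoetherian.noetherian _) h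
    (maximalIdeal_le_jacobson ⊥)

/-- Let `(R, m)` be a Noetherian local ring which is not a field, and `I`
a proper ideal with `m² ⊆ I` such that `R/I` is Gorenstein (equivalently, the socle
`(I :_R m)/I` is a one-dimensional `R/m`-vector space, i.e. has length one).  If `I` is not
weakly `m`-full, i.e. `(mI :_R m) ≠ I`, then `m² = Im` and `μ_R(m) = 1 + μ_R(I)`. -/
theorem stmt16 (R : Type*) [CommRing R] [IsNoetherianRing R] [IsLocalRing R]
    (hnf : ¬ IsField R)
    (I : Ideal R) (hI : I ≠ ⊤)
    (hm2 : (IsLocalRing.maximalIdeal R) ^ 2 ≤ I)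
    -- `R/I` is Gorenstein: the socle `(I :_R m)/I` has length one:
    (hGor : modLength R
      (↥(I.colon (IsLocalRing.maximalIdeal R)) ⧸
        Submodule.comap (I.colon (IsLocalRing.maximalIdeal R)).subtype I) = 1)
    -- `I` is not weakly `m`-full:
    (hwm : (IsLocalRing.maximalIdeal R * I).colon (IsLocalRing.maximalIdeal R) ≠ I) :
    (IsLocalRing.maximalIdeal R) ^ 2 = I * IsLocalRing.maximalIdeal R ∧
    mu (IsLocalRing.maximalIdeal R) = 1 + mu I := by
  set m := maximalIdeal R
  rw [modLength_eq_length, Module.length_eq_one_iff] at hGor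
  have hsocle : ∀ J : Ideal R, I ≤ J → J ≤ I.colon m → J = I ∨ J = I.colon m :=
    fun _ => eq_or_eq_of_isSimpleModule_quotient hGor
  have hIm : I ≤ m := le_maximalIdeal hI
  have hK : (m * I).colon m = I.colon m :=
    ((hsocle _ (Ideal.le_colon_iff_mul_le.mpr (mul_comm I m).le)
      (colon_mono Ideal.mul_le_right subset_rfl)).resolve_left hwm)
  have hmI : I ≠ m := by
    rintro rfl
    refine hnf (isField_iff_maximalIdeal_eq.mpr (maximalIdeal_eq_bot_of_le_mul_self ?_))
    have htop : ⊤ ≤ (m * m).colon m := by rw [hK, (colon_eq_top_iff_subset _).mpr subset_rfl]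
    simpa using Ideal.le_colon_iff_mul_le.mp htop
  have hmS : m = I.colon m :=
    (hsocle m hIm (Ideal.le_colon_iff_mul_le.mpr (pow_two m ▸ hm2))).resolve_left hmI.symm
  have hsq : m * m ≤ m * I := Ideal.le_colon_iff_mul_le.mp (hmS.trans hK.symm).le
  have hIltm : I < m := lt_of_le_of_ne hIm hmI
  obtain ⟨x, hxm, hxI⟩ := SetLike.exists_of_lt hIltm
  have hmx : I ⊔ Ideal.span {x} = m := by
    refine ((hsocle _ le_sup_left ?_).resolve_left fun h => hxI ?_).trans hmS.symm
    · exact hmS ▸ sup_le hIm ((Ideal.span_singleton_le_iff_mem m).mpr hxm)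
    · exact h ▸ mem_sup_right (Ideal.mem_span_singleton_self x)
  refine ⟨le_antisymm (by rwa [pow_two, mul_comm I]) (pow_two m ▸ Ideal.mul_mono_left hIm), ?_⟩
  rw [mu_eq_spanFinrank, mu_eq_spanFinrank, add_comm]
  refine le_antisymm (hmx ▸ spanFinrank_sup_span_singleton_le (IsNoetherian.noetherian I) x) ?_
  exact spanFinrank_lt_of_lt_of_smul_le (IsNoetherian.noetherian I) (IsNoetherian.noetherian m)
    hIltm (by simpa only [Ideal.smul_eq_mul] using hsq)
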